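/- Code-offset secure sketch for the Hamming metric: let F be a finite abelian group (written additively) of size F, let f = log₂ F, and let C ⊆ F^n be a code with K codewords and minimum Hamming distance at least 2t+1. Define SS(w) = w − c for c chosen uniformly at random from C, and let Rec(w', s) output c' + s where c' is the unique codeword of C with Hamming distance at most t from w' − s (if one exists). Then (SS, Rec) is an average-case (F^n, m, m − (n·f − log₂ K), t)-secure sketch (for F^n with the Hamming metric) for every m; in particular, for an [n, k, 2t+1]_F code with K = F^k, the entropy loss is (n − k)·f. -/

import Mathlib

open Finset

/-! Correctness is unique decoding: `w' - (w - c)` lies within distance `t` of the codeword `c`,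
and a minimum distance of `2t+1` leaves no other codeword that close. For security, a fixed
`w` yields the sketch `s` from at most one codeword, so `Pr[W = w, SS(W) = s | I = i]` is at most
`Pr[W = w | I = i] / K`; summing the conditional maxima over the `|𝔽|ⁿ` values of `s` loses
a factor of at most `|𝔽|ⁿ / K`. -/

/-- A probability distribution on a finite type. -/
def IsDist {α : Type*} [Fintype α] (p : α → ℝ) : Prop :=
  (∀ a, 0 ≤ p a) ∧ ∑ a, p a = 1

/-- Average min-entropy `H̃∞(A | B)`. -/
noncomputable def avgMinEntropy {α β : Type*} [Fintype α] [Fintype β] (p : α × β → ℝ) : ℝ :=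
  - Real.logb 2 (∑ b, ⨆ a, p (a, b))

section MinEntropy

variable {α β γ : Type*} [Fintype α] [Fintype β] [Fintype γ]

theorem IsDist.exists_pos {p : α → ℝ} (hp : IsDist p) : ∃ a, 0 < p a := by
  by_contra! h
  have hsum := hp.2
  rw [sum_eq_zero fun a _ => (h a).antisymm (hp.1 a)] at hsum
  exact zero_ne_one hsum

theorem sum_iSup_pos {p : α × β → ℝ} (hp0 : ∀ x, 0 ≤ p x) {x : α × β} (hx : 0 < p x) :
    0 < ∑ b, ⨆ a, p (a, b) :=
  sum_pos' (fun b _ =>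
      (hp0 (x.1, b)).trans (le_ciSup (Finite.bddAbove_range fun a => p (a, b)) x.1))
    ⟨x.2, mem_univ _, hx.trans_le (le_ciSup (Finite.bddAbove_range fun a => p (a, x.2)) x.1)⟩

theorem sum_iSup_le_card_mul [Nonempty α] {p : α × β → ℝ} {q : α × γ × β → ℝ} {r : ℝ}
    (hr : 0 ≤ r) (hqp : ∀ a s i, q (a, s, i) ≤ r * p (a, i)) :
    ∑ b, ⨆ a, q (a, b) ≤ Fintype.card γ * r * ∑ i, ⨆ a, p (a, i) :=
  calc ∑ b : γ × β, ⨆ a, q (a, b) ≤ ∑ b : γ × β, r * ⨆ a, p (a, b.2) :=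
        sum_le_sum fun b _ => ciSup_le fun a => (hqp a b.1 b.2).trans
          (mul_le_mul_of_nonneg_left (le_ciSup (Finite.bddAbove_range fun a => p (a, b.2)) a) hr)
    _ = Fintype.card γ * r * ∑ i, ⨆ a, p (a, i) := by
        rw [Fintype.sum_prod_type]
        simp [mul_sum, mul_assoc]

theorem avgMinEntropy_sub_logb_le {p : α × β → ℝ} {q : α × γ → ℝ} {L : ℝ} (hL : 0 < L)
    (hq : 0 < ∑ b, ⨆ a, q (a, b)) (hqp : ∑ b, ⨆ a, q (a, b) ≤ L * ∑ b, ⨆ a, p (a, b)) :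
    avgMinEntropy p - Real.logb 2 L ≤ avgMinEntropy q := by
  have hp : 0 < ∑ b, ⨆ a, p (a, b) := pos_of_mul_pos_right (hq.trans_le hqp) hL.le
  have hlog := Real.logb_le_logb_of_le one_lt_two hq hqp
  rw [Real.logb_mul hL.ne' hp.ne'] at hlog
  unfold avgMinEntropy
  linarith

end MinEntropy

section Decoding

variable {ι β : Type*} [Fintype ι] [DecidableEq β]

theorem eq_of_hammingDist_le_of_two_mul_add_one_le {C : Finset (ι → β)} {t : ℕ}
    (hmin : ∀ c₁ ∈ C, ∀ c₂ ∈ C, c₁ ≠ c₂ → 2 * t + 1 ≤ hammingDist c₁ c₂)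
    {x c₁ c₂ : ι → β} (hc₁ : c₁ ∈ C) (hc₂ : c₂ ∈ C)
    (hx₁ : hammingDist x c₁ ≤ t) (hx₂ : hammingDist x c₂ ≤ t) : c₁ = c₂ := by
  by_contra hne
  have := hmin c₁ hc₁ c₂ hc₂ hne
  have := hammingDist_triangle_left c₁ c₂ x
  omega

variable [AddCommGroup β]

open Classical in
noncomputable def codeOffsetRec (C : Finset (ι → β)) (t : ℕ) (w' s : ι → β) : ι → β :=
  if h : ∃ c ∈ C, hammingDist (w' - s) c ≤ t then h.choose + s else w'

theorem codeOffsetRec_sub {C : Finset (ι → β)} {t : ℕ}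
    (hmin : ∀ c₁ ∈ C, ∀ c₂ ∈ C, c₁ ≠ c₂ → 2 * t + 1 ≤ hammingDist c₁ c₂)
    {w w' c : ι → β} (hc : c ∈ C) (hd : hammingDist w w' ≤ t) :
    codeOffsetRec C t w' (w - c) = w := by
  have hdc : hammingDist (w' - (w - c)) c ≤ t := by
    rwa [hammingDist_eq_hammingNorm, show -(w' - (w - c)) + c = -w' + w by abel,
      ← hammingDist_eq_hammingNorm, hammingDist_comm]
  have h : ∃ c' ∈ C, hammingDist (w' - (w - c)) c' ≤ t := ⟨c, hc, hdc⟩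
  rw [codeOffsetRec, dif_pos h,
    eq_of_hammingDist_le_of_two_mul_add_one_le hmin h.choose_spec.1 hc h.choose_spec.2 hdc,
    add_sub_cancel]

end Decoding

section Sketch

variable {G ι : Type*} [AddGroup G] [DecidableEq G]

theorem card_filter_sub_eq_le_one (C : Finset G) (w s : G) :
    (univ.filter fun c : {c // c ∈ C} => w - c.1 = s).card ≤ 1 :=
  card_le_one.2 fun _ ha _ hb => Subtype.ext <| sub_right_injective <|
    (mem_filter.1 ha).2.trans (mem_filter.1 hb).2.symm

/-- The joint distribution of `(W, SS(W), I)` for the code-offset sketch `SS(w) = w - c`. -/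
noncomputable def codeOffsetJoint (C : Finset G) (p : G × ι → ℝ) (x : G × G × ι) : ℝ :=
  p (x.1, x.2.2) * ((univ.filter fun c : {c // c ∈ C} => x.1 - c.1 = x.2.1).card : ℝ) / #C

variable {C : Finset G} {p : G × ι → ℝ}

theorem codeOffsetJoint_nonneg (hp : ∀ x, 0 ≤ p x) (x : G × G × ι) :
    0 ≤ codeOffsetJoint C p x :=
  div_nonneg (mul_nonneg (hp _) (Nat.cast_nonneg _)) (Nat.cast_nonneg _)

theorem codeOffsetJoint_le (hp : ∀ x, 0 ≤ p x) (w s : G) (i : ι) :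
    codeOffsetJoint C p (w, s, i) ≤ (#C : ℝ)⁻¹ * p (w, i) := by
  rw [codeOffsetJoint, mul_div_assoc, mul_comm, ← one_div]
  gcongr
  · exact hp _
  · exact_mod_cast card_filter_sub_eq_le_one C w s

theorem codeOffsetJoint_pos {c : G} (hc : c ∈ C) {w : G} {i : ι} (hp : 0 < p (w, i)) :
    0 < codeOffsetJoint C p (w, w - c, i) := by
  have hcard : 0 < (univ.filter fun c' : {c // c ∈ C} => w - c'.1 = w - c).card :=
    card_pos.2 ⟨⟨c, hc⟩, by simp⟩
  have hC : 0 < #C := card_pos.2 ⟨c, hc⟩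
  unfold codeOffsetJoint
  positivity

end Sketch

/-- Code-offset secure sketch for the Hamming metric: if `C ⊆ 𝔽ⁿ` is a
code with `K` codewords and minimum Hamming distance at least `2t+1` over a finite abelian
group `𝔽`, then `SS(w) = w − c` for a uniformly random codeword `c` (with recovery by
decoding `w' − s` and shifting back) is an average-case
`(𝔽ⁿ, m, m − (n·log₂|𝔽| − log₂ K), t)`-secure sketch for every `m`. -/
theorem code_offset_secure_sketch {𝔽 : Type} [Fintype 𝔽] [DecidableEq 𝔽] [AddCommGroup 𝔽]
    {n : ℕ} (C : Finset (Fin n → 𝔽)) (K t : ℕ) (hK : C.card = K) (hKpos : 0 < K)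
    (hmin : ∀ c₁ ∈ C, ∀ c₂ ∈ C, c₁ ≠ c₂ → 2 * t + 1 ≤ hammingDist c₁ c₂)
    (m : ℝ) :
    ∃ Rec : (Fin n → 𝔽) → (Fin n → 𝔽) → (Fin n → 𝔽),
      -- correctness: for every choice `c ∈ C` of the random codeword
      (∀ (w w' : Fin n → 𝔽) (c : {c // c ∈ C}), hammingDist w w' ≤ t →
        Rec w' (w - c.1) = w) ∧
      -- average-case security
      ∀ (ι : Type) [Fintype ι] (p : (Fin n → 𝔽) × ι → ℝ),
        IsDist p → m ≤ avgMinEntropy p →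
        m - ((n : ℝ) * Real.logb 2 (Fintype.card 𝔽 : ℝ) - Real.logb 2 (K : ℝ))
          ≤ avgMinEntropy (fun x : (Fin n → 𝔽) × (Fin n → 𝔽) × ι =>
              p (x.1, x.2.2) *
                ((Finset.univ.filter fun c : {c // c ∈ C} => x.1 - c.1 = x.2.1).card : ℝ)
                / (K : ℝ)) := by
  refine ⟨codeOffsetRec C t, fun w w' c hd => codeOffsetRec_sub hmin c.2 hd, ?_⟩
  intro ι _ p hp hm
  subst hK
  have hC : (0 : ℝ) < #C := by exact_mod_cast hKpos
  obtain ⟨c₀, hc₀⟩ := card_pos.1 hKpos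
  obtain ⟨⟨a₀, i₀⟩, hpos⟩ := hp.exists_pos
  have hcard : (0 : ℝ) < Fintype.card (Fin n → 𝔽) := by exact_mod_cast Fintype.card_pos
  have hlogb : Real.logb 2 (Fintype.card (Fin n → 𝔽) * (#C : ℝ)⁻¹) =
      n * Real.logb 2 (Fintype.card 𝔽) - Real.logb 2 #C := by
    rw [Real.logb_mul hcard.ne' (inv_pos.2 hC).ne', Real.logb_inv, Fintype.card_fun,
      Fintype.card_fin, Nat.cast_pow, Real.logb_pow, sub_eq_add_neg]
  change _ ≤ avgMinEntropy (codeOffsetJoint C p)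
  refine le_trans ?_ (avgMinEntropy_sub_logb_le (mul_pos hcard (inv_pos.2 hC))
    (sum_iSup_pos (codeOffsetJoint_nonneg hp.1) (codeOffsetJoint_pos hc₀ hpos))
    (sum_iSup_le_card_mul (inv_nonneg.2 hC.le) fun a s i => codeOffsetJoint_le hp.1 a s i))
  linarith
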